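/- Let p and q be distinct odd primes and n = pq. Then the distance energy of the unitary Cayley graph X_n = ICG_n({1}) equals DE(ICG_n({1})) = 6(p − 1)(q − 1). -/

import Mathlib

/-!
Through the Chinese remainder theorem `ZMod (p * q) ≃+* ZMod p × ZMod q`, the unitary Cayley
graph `X_{pq}` becomes the tensor product `K_p × K_q`: two vertices are adjacent iff they differ
in both coordinates. As `p, q ≥ 3`, any two vertices have a common neighbour, so the distance
matrix is `(J + 1) ⊗ (J + 1) - 4` (`J` the all-ones matrix), its entry at `(a, b)` being
`2 ^ #{i | aᵢ = bᵢ} - 4 [a = b]`. The matrix `J + 1` of size `m` has eigenvalues `m + 1` (once)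
and `1`, so the distance eigenvalues are `(p + 1)(q + 1) - 4`, `p - 3`, `q - 3` and `-3`, with
multiplicities `1`, `q - 1`, `p - 1` and `(p - 1)(q - 1)`; their absolute values add up to
`6(p - 1)(q - 1)`.
-/

open scoped Classical

/-- The integral circulant graph `ICG_n(D)`: vertices `0,…,n-1` (as `ZMod n`), with `a ~ b` iff
`gcd(a-b, n) ∈ D`. -/
def ICG (n : ℕ) (D : Finset ℕ) : SimpleGraph (ZMod n) where
  Adj a b := a ≠ b ∧ Int.gcd ((a.val : ℤ) - (b.val : ℤ)) n ∈ D
  symm := by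
    constructor
    rintro a b ⟨hne, h⟩
    refine ⟨hne.symm, ?_⟩
    rwa [show ((b.val : ℤ) - a.val) = -((a.val : ℤ) - b.val) by ring, Int.neg_gcd]
  loopless := by constructor; rintro a ⟨h, -⟩; exact h rfl

/-- The distance matrix of a graph. -/
noncomputable def distMatrix {V : Type} [Fintype V] (G : SimpleGraph V) : Matrix V V ℝ :=
  Matrix.of fun i j => (G.dist i j : ℝ)

/-- The distance energy: the sum of the absolute values of the eigenvalues (with multiplicity)
of the distance matrix, i.e. of the roots of its characteristic polynomial. -/
noncomputable def distEnergy {V : Type} [Fintype V] [DecidableEq V] (G : SimpleGraph V) : ℝ :=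
  ((distMatrix G).charpoly.roots.map fun x => |x|).sum

open Matrix Polynomial
open scoped Kronecker

theorem Fintype.sum_ite_eq_add {ι M : Type*} [Fintype ι] [DecidableEq ι] [AddCommMonoid M]
    (i₀ : ι) (a b : M) :
    ∑ i, (if i = i₀ then a else b) = a + (Fintype.card ι - 1) • b := by
  rw [Fintype.sum_eq_add_sum_compl i₀, if_pos rfl,
    Finset.sum_congr rfl fun i hi => if_neg (by simpa using hi)]
  simp [Finset.card_compl]

theorem Fintype.exists_ne_ne_of_two_lt_card {α : Type*} [Fintype α] [DecidableEq α]
    (h : 2 < Fintype.card α) (a b : α) : ∃ c, c ≠ a ∧ c ≠ b := by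
  obtain ⟨c, hc⟩ : ({a, b}ᶜ : Finset α).Nonempty := by
    rw [← Finset.card_pos, Finset.card_compl]
    have := Finset.card_le_two (a := a) (b := b)
    omega
  exact ⟨c, by simpa [not_or] using hc⟩

theorem Polynomial.roots_finset_prod_X_sub_C {ι R : Type*} [CommRing R] [IsDomain R]
    (s : Finset ι) (f : ι → R) : (∏ i ∈ s, (X - C (f i))).roots = s.val.map f := by
  rw [Finset.prod_eq_multiset_prod, ← roots_multiset_prod_X_sub_C (s.val.map f), Multiset.map_map]
  rfl

namespace Matrix

section Charpoly

variable {ι R : Type*} [Fintype ι] [DecidableEq ι] [CommRing R]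

theorem charpoly_mul_diagonal_mul {S T : Matrix ι ι R} (hST : S * T = 1) (d : ι → R) :
    (S * diagonal d * T).charpoly = ∏ i, (X - C (d i)) := by
  rw [mul_assoc, charpoly_mul_comm, mul_assoc, mul_eq_one_comm.mp hST, mul_one,
    charpoly_diagonal]

variable {κ : Type*} [Fintype κ] [DecidableEq κ] {S T : Matrix ι ι R} {S' T' : Matrix κ κ R}

theorem kronecker_mul_kronecker_eq_one (hST : S * T = 1) (hST' : S' * T' = 1) :
    (S ⊗ₖ S') * (T ⊗ₖ T') = 1 := by
  rw [← mul_kronecker_mul, hST, hST', one_kronecker_one]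

theorem kronecker_sub_smul_one_eq (hST : S * T = 1) (hST' : S' * T' = 1)
    (a : ι → R) (b : κ → R) (c : R) :
    (S * diagonal a * T) ⊗ₖ (S' * diagonal b * T') - c • 1 =
      (S ⊗ₖ S') * diagonal (fun x => a x.1 * b x.2 - c) * (T ⊗ₖ T') := by
  have hdiag : diagonal (fun x : ι × κ => a x.1 * b x.2 - c) =
      diagonal a ⊗ₖ diagonal b - c • 1 := by
    rw [diagonal_kronecker_diagonal, smul_one_eq_diagonal, ← diagonal_sub]
  rw [hdiag, mul_sub, sub_mul, mul_smul_comm, mul_one, smul_mul_assoc,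
    kronecker_mul_kronecker_eq_one hST hST', mul_kronecker_mul, mul_kronecker_mul]

end Charpoly

section OnesAddOne

variable {ι K : Type*} [Fintype ι] [DecidableEq ι] [Field K] (i₀ : ι)

/-- Column `i₀` is the all-ones vector, column `k ≠ i₀` is `e_k - e_{i₀}`: eigenvectors of
`J + 1` (with `J` the all-ones matrix) for the eigenvalues `card ι + 1` and `1`. -/
def onesAddOneEigenvectors : Matrix ι ι K :=
  of fun i k => (if i = k then 1 else 0) - (if i = i₀ then 1 else 0) + (if k = i₀ then 1 else 0)

def onesAddOneEigenvectorsInv : Matrix ι ι K :=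
  of fun k j => (if k = j then 1 else 0) - (if k = i₀ then (if j = i₀ then 1 else 0) else 0) +
    ((if k = i₀ then 2 else 0) - 1) / Fintype.card ι

def onesAddOneEigenvalues : ι → K := fun k => if k = i₀ then (Fintype.card ι : K) + 1 else 1

theorem onesAddOneEigenvectors_mul_inv [CharZero K] :
    onesAddOneEigenvectors (K := K) i₀ * onesAddOneEigenvectorsInv i₀ = 1 := by
  have hm : (Fintype.card ι : K) ≠ 0 :=
    Nat.cast_ne_zero.mpr (Fintype.card_pos_iff.mpr ⟨i₀⟩).ne'
  ext i j
  simp [onesAddOneEigenvectors, onesAddOneEigenvectorsInv, mul_apply, Finset.sum_add_distrib,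
    add_mul, sub_mul, mul_add, mul_sub, ite_mul, Finset.sum_sub_distrib, one_apply,
    ← Finset.sum_div]
  split_ifs <;> field_simp <;> ring

theorem onesAddOne_mul_eigenvectors :
    (of (fun _ _ => 1) + 1) * onesAddOneEigenvectors (K := K) i₀ =
      onesAddOneEigenvectors i₀ * diagonal (onesAddOneEigenvalues i₀) := by
  rw [add_mul, one_mul]
  ext i j
  simp [onesAddOneEigenvectors, onesAddOneEigenvalues, mul_apply, Finset.sum_add_distrib,
    diagonal_apply, Finset.sum_sub_distrib]
  split_ifs <;> simp_all

theorem onesAddOne_eq_mul_diagonal_mul [CharZero K] :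
    of (fun _ _ => 1) + 1 = onesAddOneEigenvectors (K := K) i₀ *
      diagonal (onesAddOneEigenvalues i₀) * onesAddOneEigenvectorsInv i₀ := by
  rw [← onesAddOne_mul_eigenvectors, mul_assoc, onesAddOneEigenvectors_mul_inv, mul_one]

theorem sum_comp_onesAddOneEigenvalues {M : Type*} [AddCommMonoid M] (f : K → M) :
    ∑ i, f (onesAddOneEigenvalues i₀ i) =
      f (Fintype.card ι + 1) + (Fintype.card ι - 1) • f 1 := by
  simp only [onesAddOneEigenvalues, apply_ite f, Fintype.sum_ite_eq_add]

theorem sum_abs_onesAddOneEigenvalues_mul_sub_four {κ : Type*} [Fintype κ] [DecidableEq κ]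
    (j₀ : κ) (hι : 3 ≤ Fintype.card ι) (hκ : 3 ≤ Fintype.card κ) :
    ∑ x : ι × κ,
        |onesAddOneEigenvalues i₀ x.1 * onesAddOneEigenvalues j₀ x.2 - (4 : ℝ)| =
      6 * (Fintype.card ι - 1) * (Fintype.card κ - 1) := by
  rw [Fintype.sum_prod_type, Finset.sum_congr rfl fun i _ =>
    sum_comp_onesAddOneEigenvalues j₀ fun s => |onesAddOneEigenvalues i₀ i * s - (4 : ℝ)|,
    sum_comp_onesAddOneEigenvalues i₀ fun r =>
      |r * (Fintype.card κ + 1) - (4 : ℝ)| + (Fintype.card κ - 1) • |r * 1 - 4|]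
  have hp : (3 : ℝ) ≤ Fintype.card ι := by exact_mod_cast hι
  have hq : (3 : ℝ) ≤ Fintype.card κ := by exact_mod_cast hκ
  rw [abs_of_nonneg (by nlinarith), abs_of_nonneg (by nlinarith), abs_of_nonneg (by nlinarith),
    abs_of_neg (by norm_num)]
  simp only [nsmul_eq_mul, Nat.cast_pred (by omega : 0 < Fintype.card ι),
    Nat.cast_pred (by omega : 0 < Fintype.card κ)]
  ring

end OnesAddOne

end Matrix

theorem distEnergy_eq_sum_abs_of_charpoly_eq {V : Type} {ι : Type*} [Fintype V] [DecidableEq V]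
    [Fintype ι] {G : SimpleGraph V} {d : ι → ℝ} (h : (distMatrix G).charpoly = ∏ i, (X - C (d i))) :
    distEnergy G = ∑ i, |d i| := by
  rw [distEnergy, h, roots_finset_prod_X_sub_C, Multiset.map_map, Finset.sum_eq_multiset_sum]
  rfl

theorem SimpleGraph.dist_eq_ite_of_forall_exists_adj_adj {V : Type*} {G : SimpleGraph V}
    [DecidableEq V] [DecidableRel G.Adj] (h : ∀ u v, ∃ w, G.Adj u w ∧ G.Adj w v) (u v : V) :
    G.dist u v = if u = v then 0 else if G.Adj u v then 1 else 2 := by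
  split_ifs with huv hadj
  · simp [huv]
  · exact dist_eq_one_iff_adj.mpr hadj
  · obtain ⟨w, huw, hwv⟩ := h u v
    have : G.edist u v = 2 := edist_eq_two_iff.mpr ⟨huv, hadj, w, huw, hwv.symm⟩
    simp [dist, this]

theorem ICG_one_adj_iff {n : ℕ} [NeZero n] {x y : ZMod n} :
    (ICG n {1}).Adj x y ↔ x ≠ y ∧ IsUnit (x - y) := by
  have hcast : (((x.val : ℤ) - y.val : ℤ) : ZMod n) = x - y := by simp
  rw [← hcast, ZMod.coe_int_isUnit_iff_isCoprime, isCoprime_comm, Int.isCoprime_iff_gcd_eq_one]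
  simp [ICG]

section ChineseRemainder

variable {p q : ℕ} [Fact p.Prime] [Fact q.Prime]

theorem isUnit_sub_iff_chineseRemainder (hpq : p.Coprime q) {x y : ZMod (p * q)} :
    IsUnit (x - y) ↔
      (ZMod.chineseRemainder hpq x).1 ≠ (ZMod.chineseRemainder hpq y).1 ∧
        (ZMod.chineseRemainder hpq x).2 ≠ (ZMod.chineseRemainder hpq y).2 := by
  rw [← isUnit_map_iff (ZMod.chineseRemainder hpq), Prod.isUnit_iff, map_sub]
  simp [sub_eq_zero]

theorem ICG_one_adj_iff_chineseRemainder (hpq : p.Coprime q) {x y : ZMod (p * q)} :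
    (ICG (p * q) {1}).Adj x y ↔
      (ZMod.chineseRemainder hpq x).1 ≠ (ZMod.chineseRemainder hpq y).1 ∧
        (ZMod.chineseRemainder hpq x).2 ≠ (ZMod.chineseRemainder hpq y).2 := by
  rw [ICG_one_adj_iff, isUnit_sub_iff_chineseRemainder hpq, and_iff_right_iff_imp]
  rintro h rfl
  exact h.1 rfl

theorem ICG_one_exists_adj_adj (hpq : p.Coprime q) (hp : 2 < p) (hq : 2 < q) (x y : ZMod (p * q)) :
    ∃ w, (ICG (p * q) {1}).Adj x w ∧ (ICG (p * q) {1}).Adj w y := by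
  set e := ZMod.chineseRemainder hpq
  obtain ⟨a, hax, hay⟩ :=
    Fintype.exists_ne_ne_of_two_lt_card (by rwa [ZMod.card]) (e x).1 (e y).1
  obtain ⟨b, hbx, hby⟩ :=
    Fintype.exists_ne_ne_of_two_lt_card (by rwa [ZMod.card]) (e x).2 (e y).2
  refine ⟨e.symm (a, b), ?_, ?_⟩ <;>
    simp only [ICG_one_adj_iff_chineseRemainder hpq, e, RingEquiv.apply_symm_apply] <;>
    tauto

theorem reindex_distMatrix_ICG_one (hpq : p.Coprime q) (hp : 2 < p) (hq : 2 < q) :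
    reindex (ZMod.chineseRemainder hpq).toEquiv (ZMod.chineseRemainder hpq).toEquiv
        (distMatrix (ICG (p * q) {1})) =
      (of (fun _ _ => 1) + 1) ⊗ₖ (of (fun _ _ => 1) + 1) - (4 : ℝ) • 1 := by
  ext a b
  rw [reindex_apply, submatrix_apply, distMatrix, of_apply,
    SimpleGraph.dist_eq_ite_of_forall_exists_adj_adj (ICG_one_exists_adj_adj hpq hp hq),
    ICG_one_adj_iff_chineseRemainder hpq]
  by_cases h₁ : a.1 = b.1 <;> by_cases h₂ : a.2 = b.2 <;>
    simp [h₁, h₂, one_apply, Prod.ext_iff] <;> norm_num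

end ChineseRemainder

/-- for distinct odd primes `p, q` and `n = pq`, the distance energy of the
unitary Cayley graph `X_n = ICG_n({1})` equals `6(p-1)(q-1)`. -/
theorem distEnergy_ICG_pq_one (p q : ℕ) (hp : p.Prime) (hq : q.Prime) (hpodd : Odd p)
    (hqodd : Odd q) (hpq : p ≠ q) (n : ℕ) [NeZero n] (hn : n = p * q) :
    distEnergy (ICG n {1}) = 6 * ((p : ℝ) - 1) * ((q : ℝ) - 1) := by
  subst hn
  have : Fact p.Prime := ⟨hp⟩
  have : Fact q.Prime := ⟨hq⟩
  have hp2 : 2 < p := hp.two_le.lt_of_ne' (by rintro rfl; exact absurd hpodd (by decide))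
  have hq2 : 2 < q := hq.two_le.lt_of_ne' (by rintro rfl; exact absurd hqodd (by decide))
  have hco : p.Coprime q := (Nat.coprime_primes hp hq).mpr hpq
  have hcharpoly : (distMatrix (ICG (p * q) {1})).charpoly = ∏ x : ZMod p × ZMod q,
      (X - C (onesAddOneEigenvalues 0 x.1 * onesAddOneEigenvalues 0 x.2 - 4)) := by
    rw [← charpoly_reindex (ZMod.chineseRemainder hco).toEquiv,
      reindex_distMatrix_ICG_one hco hp2 hq2,
      onesAddOne_eq_mul_diagonal_mul 0, onesAddOne_eq_mul_diagonal_mul 0,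
      kronecker_sub_smul_one_eq (onesAddOneEigenvectors_mul_inv 0)
        (onesAddOneEigenvectors_mul_inv 0),
      charpoly_mul_diagonal_mul (kronecker_mul_kronecker_eq_one
        (onesAddOneEigenvectors_mul_inv 0) (onesAddOneEigenvectors_mul_inv 0))]
  rw [distEnergy_eq_sum_abs_of_charpoly_eq hcharpoly,
    sum_abs_onesAddOneEigenvalues_mul_sub_four 0 0 (by rwa [ZMod.card]) (by rwa [ZMod.card]),
    ZMod.card, ZMod.card]
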